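/- arXiv:1908.07718 — 3 statements merged into one kernel-verified Lean document; each statement's English description precedes it below -/
import Mathlib

section
/- For the GSR riffle shuffle of n cards, the probability that card i ends up at position j equals: (1/2^j)·C(j-1, j-i) if i < j; (2^{j-1} + 2^{n-j})/2^n if i = j; and (1/2^{n-j+1})·C(n-j, i-j) if i > j. -/
/-- Number of rising sequences of a permutation of `Fin n` (0-indexed values:
value `i` stands for card `i+1`, and `π j` is the card at position `j`). -/
def risingSequences {n : ℕ} (π : Equiv.Perm (Fin n)) : ℕ :=
  1 + (Finset.univ.filter (fun i : Fin n =>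
      ∃ j : Fin n, (j : ℕ) = (i : ℕ) + 1 ∧ π.symm j < π.symm i)).card

/-- The GSR riffle shuffle distribution on `S_n`: `(n+1)/2^n` on the identity,
`1/2^n` on each permutation with exactly two rising sequences, `0` otherwise. -/
noncomputable def Qgsr (n : ℕ) (π : Equiv.Perm (Fin n)) : ℝ :=
  if π = 1 then ((n : ℝ) + 1) / 2 ^ n
  else if risingSequences π = 2 then 1 / 2 ^ n else 0

/-- Transition matrix of the GSR shuffle: `Pmat n i j` is the probability that
card `i` (0-indexed) ends up at position `j` (0-indexed). -/
noncomputable def Pmat (n : ℕ) (i j : Fin n) : ℝ :=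
  ∑ π ∈ Finset.univ.filter (fun π : Equiv.Perm (Fin n) => π j = i), Qgsr n π

open Finset

namespace GSRAux

variable {n : ℕ}

/-- chain criterion for strict monotonicity on `Fin k` -/
lemma strictMono_of_adj {k : ℕ} {α : Type*} [Preorder α] {f : Fin k → α}
    (h : ∀ m : ℕ, (hm : m + 1 < k) → f ⟨m, by omega⟩ < f ⟨m + 1, hm⟩) : StrictMono f := by
  have key : ∀ (d a : ℕ) (hb : a + d + 1 < k), f ⟨a, by omega⟩ < f ⟨a + d + 1, hb⟩ := by
    intro d
    induction d with
    | zero => intro a hb; exact h a hb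
    | succ d ih =>
        intro a hb
        have h1 : f ⟨a, by omega⟩ < f ⟨a + d + 1, by omega⟩ := ih a (by omega)
        have h2 : f ⟨a + d + 1, by omega⟩ < f ⟨a + d + 1 + 1, by omega⟩ := h (a + d + 1) (by omega)
        have : a + (d + 1) + 1 = a + d + 1 + 1 := by omega
        exact lt_trans h1 (by convert h2 using 2; exact Fin.ext this)
  intro a b hab
  have hab' : (a : ℕ) < (b : ℕ) := hab
  have hb : (a : ℕ) + ((b : ℕ) - (a : ℕ) - 1) + 1 < k := by omega
  have := key ((b : ℕ) - (a : ℕ) - 1) a hb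
  have ha : (⟨(a : ℕ), by omega⟩ : Fin k) = a := by ext; rfl
  have hbb : (⟨(a : ℕ) + ((b : ℕ) - (a : ℕ) - 1) + 1, hb⟩ : Fin k) = b := by ext; simp; omega
  rwa [ha, hbb] at this

/-- characterization of the order embedding of a finset of `Fin n` -/
lemma orderEmb_eq_iff (S : Finset (Fin n)) {k : ℕ} (hk : S.card = k) (i : Fin k) (x : Fin n) :
    S.orderEmbOfFin hk i = x ↔ x ∈ S ∧ (S.filter (· < x)).card = (i : ℕ) := by
  have hsm : StrictMono (S.orderEmbOfFin hk) := (S.orderEmbOfFin hk).strictMono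
  have hrange : ∀ y, y ∈ S ↔ ∃ i' : Fin k, S.orderEmbOfFin hk i' = y := by
    intro y
    constructor
    · intro hy
      have : y ∈ Set.range (S.orderEmbOfFin hk) := by
        rw [Finset.range_orderEmbOfFin]; exact hy
      obtain ⟨i', hi'⟩ := this; exact ⟨i', hi'⟩
    · rintro ⟨i', rfl⟩; exact Finset.orderEmbOfFin_mem S hk i'
  have forward : ∀ (i : Fin k), (S.filter (· < S.orderEmbOfFin hk i)).card = (i : ℕ) := by
    intro i
    have : S.filter (· < S.orderEmbOfFin hk i)
        = (Finset.Iio i).image (S.orderEmbOfFin hk) := by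
      ext y
      simp only [Finset.mem_filter, Finset.mem_image, Finset.mem_Iio]
      constructor
      · rintro ⟨hy, hlt⟩
        obtain ⟨i', rfl⟩ := (hrange y).mp hy
        exact ⟨i', hsm.lt_iff_lt.mp hlt, rfl⟩
      · rintro ⟨i', hi', rfl⟩
        exact ⟨Finset.orderEmbOfFin_mem S hk i', hsm hi'⟩
    rw [this, Finset.card_image_of_injective _ hsm.injective, Fin.card_Iio]
  constructor
  · rintro rfl
    exact ⟨Finset.orderEmbOfFin_mem S hk i, forward i⟩
  · rintro ⟨hx, hcard⟩
    obtain ⟨i', rfl⟩ := (hrange x).mp hx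
    have := forward i'
    have : (i' : ℕ) = (i : ℕ) := by rw [← this, hcard]
    congr 1
    exact Fin.ext this.symm

end GSRAux
section Part2
open GSRAux
variable {n : ℕ}

lemma compl_card (S : Finset (Fin n)) : Sᶜ.card = n - S.card := by
  simp [Finset.card_compl]

/-- the inverse permutation of a riffle shuffle with top-packet positions `S`:
`gfun S c` is the position of card `c`. -/
def gfun (S : Finset (Fin n)) (c : Fin n) : Fin n :=
  if h : (c : ℕ) < S.card then S.orderEmbOfFin rfl ⟨c, h⟩
  else Sᶜ.orderEmbOfFin (compl_card S) ⟨(c : ℕ) - S.card, by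
    have := c.isLt; omega⟩

lemma gfun_mem_of_lt (S : Finset (Fin n)) (c : Fin n) (h : (c : ℕ) < S.card) :
    gfun S c ∈ S := by
  rw [gfun, dif_pos h]; exact Finset.orderEmbOfFin_mem _ _ _

lemma gfun_not_mem_of_ge (S : Finset (Fin n)) (c : Fin n) (h : ¬ (c : ℕ) < S.card) :
    gfun S c ∉ S := by
  rw [gfun, dif_neg h]
  have := Finset.orderEmbOfFin_mem Sᶜ (compl_card S)
    (⟨(c : ℕ) - S.card, by have := c.isLt; omega⟩ : Fin (n - S.card))
  exact fun hmem => (Finset.mem_compl.mp this) hmem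

lemma gfun_injective (S : Finset (Fin n)) : Function.Injective (gfun S) := by
  intro a b hab
  by_cases ha : (a : ℕ) < S.card <;> by_cases hb : (b : ℕ) < S.card
  · rw [gfun, dif_pos ha, gfun, dif_pos hb] at hab
    have := congrArg Fin.val ((S.orderEmbOfFin rfl).injective hab)
    exact Fin.ext this
  · exact absurd (gfun_mem_of_lt S a ha) (by rw [hab]; exact gfun_not_mem_of_ge S b hb)
  · exact absurd (gfun_mem_of_lt S b hb) (by rw [← hab]; exact gfun_not_mem_of_ge S a ha)
  · rw [gfun, dif_neg ha, gfun, dif_neg hb] at hab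
    have := (Sᶜ.orderEmbOfFin (compl_card S)).injective hab
    have h2 := congrArg Fin.val this
    simp only at h2
    exact Fin.ext (by have := a.isLt; have := b.isLt; omega)

/-- the permutation of a riffle shuffle: `permOf S j` is the card at position `j`. -/
noncomputable def permOf (S : Finset (Fin n)) : Equiv.Perm (Fin n) :=
  (Equiv.ofBijective (gfun S) ((Finite.injective_iff_bijective).mp (gfun_injective S))).symm

lemma permOf_symm_apply (S : Finset (Fin n)) (c : Fin n) : (permOf S).symm c = gfun S c := rfl

lemma permOf_apply_eq_iff (S : Finset (Fin n)) (i j : Fin n) :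
    permOf S j = i ↔ gfun S i = j := by
  rw [← permOf_symm_apply, Equiv.symm_apply_eq, eq_comm]

end Part2
section Part3
open GSRAux
variable {n : ℕ}

lemma rank_add_rank_compl (S : Finset (Fin n)) (j : Fin n) :
    (S.filter (· < j)).card + (Sᶜ.filter (· < j)).card = (j : ℕ) := by
  rw [← Finset.card_union_of_disjoint]
  · have : S.filter (· < j) ∪ Sᶜ.filter (· < j) = Finset.Iio j := by
      ext x
      simp only [Finset.mem_union, Finset.mem_filter, Finset.mem_compl, Finset.mem_Iio]
      by_cases hx : x ∈ S <;> tauto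
    rw [this, Fin.card_Iio]
  · exact Finset.disjoint_filter_filter (disjoint_compl_right)

lemma rankLe (S : Finset (Fin n)) (j : Fin n) : (S.filter (· < j)).card ≤ (j : ℕ) := by
  calc (S.filter (· < j)).card ≤ (Finset.Iio j).card := by
        apply Finset.card_le_card
        intro x hx
        simp only [Finset.mem_filter] at hx
        exact Finset.mem_Iio.mpr hx.2
    _ = (j : ℕ) := Fin.card_Iio j

lemma card_split_of_not_mem (S : Finset (Fin n)) (j : Fin n) (hj : j ∉ S) :
    S.card = (S.filter (· < j)).card + (S.filter (fun t => j < t)).card := by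
  rw [← Finset.card_union_of_disjoint]
  · congr 1
    ext x
    simp only [Finset.mem_union, Finset.mem_filter]
    constructor
    · intro hx
      rcases lt_trichotomy x j with h | h | h
      · exact Or.inl ⟨hx, h⟩
      · exact absurd (h ▸ hx) hj
      · exact Or.inr ⟨hx, h⟩
    · rintro (⟨hx, _⟩ | ⟨hx, _⟩) <;> exact hx
  · apply Finset.disjoint_filter_filter'
    rw [disjoint_iff]
    ext x
    simp only [Pi.inf_apply, inf_Prop_eq]
    constructor
    · rintro ⟨h1, h2⟩; exact absurd (lt_trans h1 h2) (lt_irrefl x)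
    · exact False.elim
  
lemma rank_lt_card_of_mem (S : Finset (Fin n)) (j : Fin n) (hj : j ∈ S) :
    (S.filter (· < j)).card < S.card := by
  apply Finset.card_lt_card
  rw [Finset.ssubset_iff_of_subset (Finset.filter_subset _ _)]
  exact ⟨j, hj, by simp⟩

lemma gfun_eq_iff (S : Finset (Fin n)) (i j : Fin n) :
    gfun S i = j ↔ ((j ∈ S ∧ (S.filter (· < j)).card = (i : ℕ)) ∨
      (j ∉ S ∧ (S.filter (fun t => j < t)).card + (j : ℕ) = (i : ℕ))) := by
  by_cases hi : (i : ℕ) < S.card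
  · rw [gfun, dif_pos hi, orderEmb_eq_iff]
    simp only
    constructor
    · exact fun h => Or.inl h
    · rintro (h | ⟨hj, hcard⟩)
      · exact h
      · -- impossible: i ≥ S.card in that case
        exfalso
        have h1 := card_split_of_not_mem S j hj
        have h2 := rankLe S j
        omega
  · rw [gfun, dif_neg hi, orderEmb_eq_iff]
    simp only [Finset.mem_compl]
    constructor
    · rintro ⟨hj, hcard⟩
      refine Or.inr ⟨hj, ?_⟩
      have h1 := rank_add_rank_compl S j
      have h2 := card_split_of_not_mem S j hj
      omega
    · rintro (⟨hj, hcard⟩ | ⟨hj, hcard⟩)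
      · exfalso
        have := rank_lt_card_of_mem S j hj
        omega
      · refine ⟨hj, ?_⟩
        have h1 := rank_add_rank_compl S j
        have h2 := card_split_of_not_mem S j hj
        have h3 := rankLe S j
        omega

end Part3
section Part4
open GSRAux
variable {n : ℕ}

lemma inter_Iio_eq_filter (S : Finset (Fin n)) (j : Fin n) :
    S ∩ Finset.Iio j = S.filter (· < j) := by
  ext x; simp [Finset.mem_filter, Finset.mem_inter, Finset.mem_Iio]

lemma inter_Ioi_eq_filter (S : Finset (Fin n)) (j : Fin n) :
    S ∩ Finset.Ioi j = S.filter (fun t => j < t) := by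
  ext x; simp [Finset.mem_filter, Finset.mem_inter, Finset.mem_Ioi]

lemma card_set1 (i j : Fin n) :
    (Finset.univ.filter fun S : Finset (Fin n) =>
        j ∈ S ∧ (S.filter (· < j)).card = (i : ℕ)).card
      = (j : ℕ).choose (i : ℕ) * 2 ^ (n - 1 - (j : ℕ)) := by
  have hcard : ((Finset.powersetCard (i : ℕ) (Finset.Iio j)) ×ˢ
      (Finset.powerset (Finset.Ioi j))).card = (j : ℕ).choose (i : ℕ) * 2 ^ (n - 1 - (j : ℕ)) := by
    simp [Finset.card_product, Fin.card_Iio, Fin.card_Ioi]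
  rw [← hcard]
  apply Finset.card_nbij' (fun S => (S ∩ Finset.Iio j, S ∩ Finset.Ioi j))
    (fun p => insert j (p.1 ∪ p.2))
  · intro S hS
    simp only [Finset.mem_coe, Finset.mem_filter, Finset.mem_univ, true_and] at hS
    simp only [Finset.mem_coe, Finset.mem_product, Finset.mem_powersetCard, Finset.mem_powerset]
    refine ⟨⟨Finset.inter_subset_right, ?_⟩, Finset.inter_subset_right⟩
    rw [inter_Iio_eq_filter]; exact hS.2
  · intro p hp
    simp only [Finset.mem_coe, Finset.mem_product, Finset.mem_powersetCard, Finset.mem_powerset] at hp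
    obtain ⟨⟨hA, hAcard⟩, hB⟩ := hp
    simp only [Finset.mem_coe, Finset.mem_filter, Finset.mem_univ, true_and]
    constructor
    · exact Finset.mem_insert_self _ _
    · have : (insert j (p.1 ∪ p.2)).filter (· < j) = p.1 := by
        ext x
        simp only [Finset.mem_filter, Finset.mem_insert, Finset.mem_union]
        constructor
        · rintro ⟨(rfl | hx | hx), hlt⟩
          · exact absurd hlt (lt_irrefl _)
          · exact hx
          · exact absurd (lt_trans (Finset.mem_Ioi.mp (hB hx)) hlt) (lt_irrefl _)
        · intro hx
          exact ⟨Or.inr (Or.inl hx), Finset.mem_Iio.mp (hA hx)⟩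
      rw [this, hAcard]
  · intro S hS
    simp only [Finset.mem_coe, Finset.mem_filter, Finset.mem_univ, true_and] at hS
    ext x
    simp only [Finset.mem_insert, Finset.mem_union, Finset.mem_inter, Finset.mem_Iio,
      Finset.mem_Ioi]
    constructor
    · rintro (rfl | ⟨hx, _⟩ | ⟨hx, _⟩) <;> first | exact hS.1 | exact hx
    · intro hx
      rcases lt_trichotomy x j with h | h | h
      · exact Or.inr (Or.inl ⟨hx, h⟩)
      · exact Or.inl h
      · exact Or.inr (Or.inr ⟨hx, h⟩)
  · intro p hp
    simp only [Finset.mem_coe, Finset.mem_product, Finset.mem_powersetCard, Finset.mem_powerset] at hp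
    obtain ⟨⟨hA, hAcard⟩, hB⟩ := hp
    have hjA : j ∉ p.1 := fun h => absurd (Finset.mem_Iio.mp (hA h)) (lt_irrefl _)
    have hjB : j ∉ p.2 := fun h => absurd (Finset.mem_Ioi.mp (hB h)) (lt_irrefl _)
    have h1 : insert j (p.1 ∪ p.2) ∩ Finset.Iio j = p.1 := by
      ext x
      simp only [Finset.mem_inter, Finset.mem_insert, Finset.mem_union, Finset.mem_Iio]
      constructor
      · rintro ⟨(rfl | hx | hx), hlt⟩
        · exact absurd hlt (lt_irrefl _)
        · exact hx
        · exact absurd (lt_trans (Finset.mem_Ioi.mp (hB hx)) hlt) (lt_irrefl _)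
      · intro hx; exact ⟨Or.inr (Or.inl hx), Finset.mem_Iio.mp (hA hx)⟩
    have h2 : insert j (p.1 ∪ p.2) ∩ Finset.Ioi j = p.2 := by
      ext x
      simp only [Finset.mem_inter, Finset.mem_insert, Finset.mem_union, Finset.mem_Ioi]
      constructor
      · rintro ⟨(rfl | hx | hx), hlt⟩
        · exact absurd hlt (lt_irrefl _)
        · exact absurd (lt_trans hlt (Finset.mem_Iio.mp (hA hx))) (lt_irrefl _)
        · exact hx
      · intro hx; exact ⟨Or.inr (Or.inr hx), Finset.mem_Ioi.mp (hB hx)⟩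
    exact Prod.ext h1 h2

end Part4
section Part5
open GSRAux
variable {n : ℕ}

lemma card_set2 (i j : Fin n) (hij : (j : ℕ) ≤ (i : ℕ)) :
    (Finset.univ.filter fun S : Finset (Fin n) =>
        j ∉ S ∧ (S.filter (fun t => j < t)).card + (j : ℕ) = (i : ℕ)).card
      = 2 ^ (j : ℕ) * (n - 1 - (j : ℕ)).choose ((i : ℕ) - (j : ℕ)) := by
  have hcard : ((Finset.powerset (Finset.Iio j)) ×ˢ
      (Finset.powersetCard ((i : ℕ) - (j : ℕ)) (Finset.Ioi j))).card
      = 2 ^ (j : ℕ) * (n - 1 - (j : ℕ)).choose ((i : ℕ) - (j : ℕ)) := by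
    simp [Finset.card_product, Fin.card_Iio, Fin.card_Ioi]
  rw [← hcard]
  apply Finset.card_nbij' (fun S => (S ∩ Finset.Iio j, S ∩ Finset.Ioi j))
    (fun p => p.1 ∪ p.2)
  · intro S hS
    simp only [Finset.mem_coe, Finset.mem_filter, Finset.mem_univ, true_and] at hS
    simp only [Finset.mem_coe, Finset.mem_product, Finset.mem_powersetCard, Finset.mem_powerset]
    refine ⟨Finset.inter_subset_right, Finset.inter_subset_right, ?_⟩
    rw [inter_Ioi_eq_filter]
    omega
  · intro p hp
    simp only [Finset.mem_coe, Finset.mem_product, Finset.mem_powersetCard, Finset.mem_powerset] at hp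
    obtain ⟨hA, hB, hBcard⟩ := hp
    simp only [Finset.mem_coe, Finset.mem_filter, Finset.mem_univ, true_and]
    have hjmem : j ∉ p.1 ∪ p.2 := by
      simp only [Finset.mem_union]
      rintro (h | h)
      · exact absurd (Finset.mem_Iio.mp (hA h)) (lt_irrefl _)
      · exact absurd (Finset.mem_Ioi.mp (hB h)) (lt_irrefl _)
    refine ⟨hjmem, ?_⟩
    have : (p.1 ∪ p.2).filter (fun t => j < t) = p.2 := by
      ext x
      simp only [Finset.mem_filter, Finset.mem_union]
      constructor
      · rintro ⟨(hx | hx), hlt⟩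
        · exact absurd (lt_trans hlt (Finset.mem_Iio.mp (hA hx))) (lt_irrefl _)
        · exact hx
      · intro hx
        exact ⟨Or.inr hx, Finset.mem_Ioi.mp (hB hx)⟩
    rw [this, hBcard]
    omega
  · intro S hS
    simp only [Finset.mem_coe, Finset.mem_filter, Finset.mem_univ, true_and] at hS
    ext x
    simp only [Finset.mem_union, Finset.mem_inter, Finset.mem_Iio, Finset.mem_Ioi]
    constructor
    · rintro (⟨hx, _⟩ | ⟨hx, _⟩) <;> exact hx
    · intro hx
      rcases lt_trichotomy x j with h | h | h
      · exact Or.inl ⟨hx, h⟩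
      · exact absurd (h ▸ hx) hS.1
      · exact Or.inr ⟨hx, h⟩
  · intro p hp
    simp only [Finset.mem_coe, Finset.mem_product, Finset.mem_powersetCard, Finset.mem_powerset] at hp
    obtain ⟨hA, hB, hBcard⟩ := hp
    have h1 : (p.1 ∪ p.2) ∩ Finset.Iio j = p.1 := by
      ext x
      simp only [Finset.mem_inter, Finset.mem_union, Finset.mem_Iio]
      constructor
      · rintro ⟨(hx | hx), hlt⟩
        · exact hx
        · exact absurd (lt_trans (Finset.mem_Ioi.mp (hB hx)) hlt) (lt_irrefl _)
      · intro hx; exact ⟨Or.inl hx, Finset.mem_Iio.mp (hA hx)⟩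
    have h2 : (p.1 ∪ p.2) ∩ Finset.Ioi j = p.2 := by
      ext x
      simp only [Finset.mem_inter, Finset.mem_union, Finset.mem_Ioi]
      constructor
      · rintro ⟨(hx | hx), hlt⟩
        · exact absurd (lt_trans hlt (Finset.mem_Iio.mp (hA hx))) (lt_irrefl _)
        · exact hx
      · intro hx; exact ⟨Or.inr hx, Finset.mem_Ioi.mp (hB hx)⟩
    exact Prod.ext h1 h2

lemma card_set1_empty (i j : Fin n) (hij : (j : ℕ) < (i : ℕ)) :
    (Finset.univ.filter fun S : Finset (Fin n) =>
        j ∈ S ∧ (S.filter (· < j)).card = (i : ℕ)).card = 0 := by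
  rw [Finset.card_eq_zero, Finset.filter_eq_empty_iff]
  rintro S - ⟨-, hcard⟩
  have := rankLe S j
  omega

lemma card_set2_empty (i j : Fin n) (hij : (i : ℕ) < (j : ℕ)) :
    (Finset.univ.filter fun S : Finset (Fin n) =>
        j ∉ S ∧ (S.filter (fun t => j < t)).card + (j : ℕ) = (i : ℕ)).card = 0 := by
  rw [Finset.card_eq_zero, Finset.filter_eq_empty_iff]
  rintro S - ⟨-, hcard⟩
  omega

end Part5
section Part6
open GSRAux
variable {n : ℕ}

/-- the descent set of `π.symm` (positions of cards) -/
def Dset (π : Equiv.Perm (Fin n)) : Finset (Fin n) :=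
  Finset.univ.filter (fun i : Fin n =>
      ∃ j : Fin n, (j : ℕ) = (i : ℕ) + 1 ∧ π.symm j < π.symm i)

lemma risingSequences_eq (π : Equiv.Perm (Fin n)) :
    risingSequences π = 1 + (Dset π).card := rfl

lemma gfun_lt (S : Finset (Fin n)) {a b : Fin n} (hab : a < b)
    (h : (b : ℕ) < S.card ∨ S.card ≤ (a : ℕ)) : gfun S a < gfun S b := by
  have hab' : (a : ℕ) < (b : ℕ) := hab
  rcases h with h | h
  · have ha : (a : ℕ) < S.card := by omega
    rw [gfun, dif_pos ha, gfun, dif_pos h]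
    exact (S.orderEmbOfFin rfl).strictMono (by rw [Fin.mk_lt_mk]; omega)
  · have hb : ¬ (b : ℕ) < S.card := by omega
    rw [gfun, dif_neg (by omega), gfun, dif_neg hb]
    exact (Sᶜ.orderEmbOfFin (compl_card S)).strictMono (by rw [Fin.mk_lt_mk]; omega)

lemma descent_card {S : Finset (Fin n)} {π : Equiv.Perm (Fin n)}
    (hS : ∀ c, gfun S c = π.symm c) : ∀ i ∈ Dset π, (i : ℕ) + 1 = S.card := by
  intro i hi
  simp only [Dset, Finset.mem_filter, Finset.mem_univ, true_and] at hi
  obtain ⟨j, hj, hlt⟩ := hi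
  rw [← hS i, ← hS j] at hlt
  have hij : i < j := by rw [Fin.lt_def]; omega
  by_contra hne
  have : gfun S i < gfun S j := by
    apply gfun_lt S hij
    rcases lt_or_ge (i : ℕ) S.card with h | h
    · left; omega
    · right; omega
  exact absurd hlt (asymm this)

lemma card_filter_val_lt (k : ℕ) (hk : k ≤ n) :
    (Finset.univ.filter fun c : Fin n => (c : ℕ) < k).card = k := by
  rcases lt_or_eq_of_le hk with hlt | heq
  · have : (Finset.univ.filter fun c : Fin n => (c : ℕ) < k) = Finset.Iio ⟨k, hlt⟩ := by
      ext c; simp [Fin.lt_def]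
    rw [this, Fin.card_Iio]
  · have : (Finset.univ.filter fun c : Fin n => (c : ℕ) < k) = Finset.univ := by
      apply Finset.filter_true_of_mem; intro c _; have := c.isLt; omega
    rw [this, Finset.card_univ, Fintype.card_fin]; exact heq.symm

lemma recover_S {S : Finset (Fin n)} {π : Equiv.Perm (Fin n)}
    (hS : ∀ c, gfun S c = π.symm c) :
    (Finset.univ.filter fun c : Fin n => (c : ℕ) < S.card).image ⇑π.symm = S := by
  have hsub : (Finset.univ.filter fun c : Fin n => (c : ℕ) < S.card).image ⇑π.symm ⊆ S := by
    intro x hx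
    simp only [Finset.mem_image, Finset.mem_filter, Finset.mem_univ, true_and] at hx
    obtain ⟨c, hc, rfl⟩ := hx
    rw [← hS c]
    exact gfun_mem_of_lt S c hc
  apply Finset.eq_of_subset_of_card_le hsub
  rw [Finset.card_image_of_injective _ π.symm.injective,
    card_filter_val_lt S.card (by simpa using Finset.card_le_univ S)]

lemma adjacent_lt {π : Equiv.Perm (Fin n)} {k : ℕ}
    (hcond : ∀ i ∈ Dset π, (i : ℕ) + 1 = k) (m : ℕ) (hm : m + 1 < n) (hne : m + 1 ≠ k) :
    π.symm ⟨m, by omega⟩ < π.symm ⟨m + 1, hm⟩ := by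
  rcases lt_trichotomy (π.symm ⟨m, by omega⟩) (π.symm ⟨m + 1, hm⟩) with h | h | h
  · exact h
  · exact absurd (π.symm.injective h) (by simp [Fin.ext_iff])
  · exfalso
    apply hne
    exact hcond ⟨m, by omega⟩ (by
      simp only [Dset, Finset.mem_filter, Finset.mem_univ, true_and]
      exact ⟨⟨m + 1, hm⟩, rfl, h⟩)

lemma gfun_of_cond {π : Equiv.Perm (Fin n)} {k : ℕ} (hk : k ≤ n)
    (hcond : ∀ i ∈ Dset π, (i : ℕ) + 1 = k) :
    ∀ c, gfun ((Finset.univ.filter fun c : Fin n => (c : ℕ) < k).image ⇑π.symm) c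
      = π.symm c := by
  set S : Finset (Fin n) := (Finset.univ.filter fun c : Fin n => (c : ℕ) < k).image ⇑π.symm
    with hSdef
  have hScard : S.card = k := by
    rw [hSdef, Finset.card_image_of_injective _ π.symm.injective, card_filter_val_lt k hk]
  have hmemS : ∀ x : Fin n, (x : ℕ) < k → π.symm x ∈ S := by
    intro x hx
    rw [hSdef]
    exact Finset.mem_image_of_mem _ (by simp [hx])
  have hmemSc : ∀ x : Fin n, k ≤ (x : ℕ) → π.symm x ∈ Sᶜ := by
    intro x hx
    rw [Finset.mem_compl]
    intro hmem
    rw [hSdef] at hmem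
    simp only [Finset.mem_image, Finset.mem_filter, Finset.mem_univ, true_and] at hmem
    obtain ⟨c, hc, hceq⟩ := hmem
    have := π.symm.injective hceq
    omega
  intro c
  by_cases hc : (c : ℕ) < S.card
  · rw [gfun, dif_pos hc]
    have hf : (fun x : Fin S.card => π.symm ⟨(x : ℕ), by have := x.isLt; omega⟩)
        = ⇑(S.orderEmbOfFin rfl) := by
      apply Finset.orderEmbOfFin_unique
      · intro x; exact hmemS _ (by simpa [hScard] using x.isLt)
      · apply strictMono_of_adj
        intro m hm
        have hmn : m + 1 < n := by omega
        have := adjacent_lt hcond m hmn (by omega)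
        convert this using 2
    calc S.orderEmbOfFin rfl ⟨(c : ℕ), hc⟩
        = (fun x : Fin S.card => π.symm ⟨(x : ℕ), by have := x.isLt; omega⟩)
            ⟨(c : ℕ), hc⟩ := by rw [hf]
      _ = π.symm c := rfl
  · rw [gfun, dif_neg hc]
    have hf : (fun x : Fin (n - S.card) =>
          π.symm ⟨S.card + (x : ℕ), by have := x.isLt; omega⟩)
        = ⇑(Sᶜ.orderEmbOfFin (compl_card S)) := by
      apply Finset.orderEmbOfFin_unique
      · intro x; exact hmemSc _ (by show k ≤ S.card + (x : ℕ); omega)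
      · apply strictMono_of_adj
        intro m hm
        have hmn : S.card + m + 1 < n := by omega
        have := adjacent_lt hcond (S.card + m) hmn (by omega)
        convert this using 3
        · exact rfl
        · exact rfl
    calc Sᶜ.orderEmbOfFin (compl_card S) ⟨(c : ℕ) - S.card, by have := c.isLt; omega⟩
        = (fun x : Fin (n - S.card) =>
            π.symm ⟨S.card + (x : ℕ), by have := x.isLt; omega⟩)
            ⟨(c : ℕ) - S.card, by have := c.isLt; omega⟩ := by rw [hf]
      _ = π.symm c := by
          have hmk : (⟨S.card + ((c : ℕ) - S.card), by have := c.isLt; omega⟩ : Fin n) = c :=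
            Fin.ext (by show S.card + ((c : ℕ) - S.card) = (c : ℕ); omega)
          exact congrArg _ hmk

lemma permOf_eq_iff (S : Finset (Fin n)) (π : Equiv.Perm (Fin n)) :
    permOf S = π ↔ ∀ c, gfun S c = π.symm c := by
  constructor
  · rintro rfl c; exact (permOf_symm_apply S c).symm
  · intro h
    have : (permOf S).symm = π.symm := by
      ext c; rw [permOf_symm_apply, h]
    calc permOf S = (permOf S).symm.symm := (Equiv.symm_symm _).symm
      _ = π.symm.symm := by rw [this]
      _ = π := Equiv.symm_symm π

lemma card_fiber (π : Equiv.Perm (Fin n)) :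
    (Finset.univ.filter fun S : Finset (Fin n) => permOf S = π).card
      = ((Finset.range (n + 1)).filter fun k => ∀ i ∈ Dset π, (i : ℕ) + 1 = k).card := by
  apply Finset.card_nbij' (fun S => S.card)
    (fun k => (Finset.univ.filter fun c : Fin n => (c : ℕ) < k).image ⇑π.symm)
  · intro S hS
    simp only [Finset.mem_coe, Finset.mem_filter, Finset.mem_univ, true_and] at hS ⊢
    rw [Finset.mem_range]
    have hS' := (permOf_eq_iff S π).mp hS
    exact ⟨by have := Finset.card_le_univ S; simp at this; omega, descent_card hS'⟩
  · intro k hk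
    simp only [Finset.mem_coe, Finset.mem_filter, Finset.mem_range] at hk
    simp only [Finset.mem_coe, Finset.mem_filter, Finset.mem_univ, true_and]
    exact (permOf_eq_iff _ π).mpr (gfun_of_cond (by omega) hk.2)
  · intro S hS
    simp only [Finset.mem_coe, Finset.mem_filter, Finset.mem_univ, true_and] at hS
    exact recover_S ((permOf_eq_iff S π).mp hS)
  · intro k hk
    simp only [Finset.mem_coe, Finset.mem_filter, Finset.mem_range] at hk
    beta_reduce
    rw [Finset.card_image_of_injective _ π.symm.injective, card_filter_val_lt k (by omega)]

end Part6
section Part7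
open GSRAux
variable {n : ℕ}

lemma Dset_one : Dset (1 : Equiv.Perm (Fin n)) = ∅ := by
  rw [Finset.eq_empty_iff_forall_notMem]
  intro i hi
  simp only [Dset, Finset.mem_filter, Finset.mem_univ, true_and] at hi
  obtain ⟨j, hj, hlt⟩ := hi
  simp only [Equiv.Perm.one_symm, Equiv.Perm.coe_one, id_eq] at hlt
  have : (j : ℕ) < (i : ℕ) := hlt
  omega

lemma eq_one_of_Dset_empty {π : Equiv.Perm (Fin n)} (h : Dset π = ∅) : π = 1 := by
  have hcond : ∀ i ∈ Dset π, (i : ℕ) + 1 = n + 1 := by rw [h]; intro i hi; exact absurd hi (by simp)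
  have hmono : StrictMono (⇑π.symm) := by
    apply strictMono_of_adj
    intro m hm
    exact adjacent_lt hcond m hm (by omega)
  have huniv : (Finset.univ : Finset (Fin n)).card = n := by
    rw [Finset.card_univ, Fintype.card_fin]
  have h1 : ⇑π.symm = ⇑(Finset.univ.orderEmbOfFin huniv) :=
    Finset.orderEmbOfFin_unique huniv (fun x => Finset.mem_univ _) hmono
  have h2 : (id : Fin n → Fin n) = ⇑(Finset.univ.orderEmbOfFin huniv) :=
    Finset.orderEmbOfFin_unique huniv (fun x => Finset.mem_univ _) strictMono_id
  have : π.symm = 1 := by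
    ext c
    have := congrFun (h1.trans h2.symm) c
    exact congrArg Fin.val (by simpa using this)
  calc π = π.symm.symm := (Equiv.symm_symm _).symm
    _ = (1 : Equiv.Perm (Fin n)).symm := by rw [this]
    _ = 1 := rfl

lemma count_k (π : Equiv.Perm (Fin n)) :
    ((Finset.range (n + 1)).filter fun k => ∀ i ∈ Dset π, (i : ℕ) + 1 = k).card
      = if π = 1 then n + 1 else if risingSequences π = 2 then 1 else 0 := by
  split_ifs with h1 h2
  · subst h1
    have : ((Finset.range (n + 1)).filter fun k => ∀ i ∈ Dset (1 : Equiv.Perm (Fin n)),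
        (i : ℕ) + 1 = k) = Finset.range (n + 1) := by
      apply Finset.filter_true_of_mem
      intro k _ i hi
      rw [Dset_one] at hi
      exact absurd hi (by simp)
    rw [this, Finset.card_range]
  · rw [risingSequences_eq] at h2
    have hcard : (Dset π).card = 1 := by omega
    obtain ⟨d, hd⟩ := Finset.card_eq_one.mp hcard
    have : ((Finset.range (n + 1)).filter fun k => ∀ i ∈ Dset π, (i : ℕ) + 1 = k)
        = {(d : ℕ) + 1} := by
      ext k
      simp only [Finset.mem_filter, Finset.mem_range, Finset.mem_singleton, hd,
        Finset.mem_singleton]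
      constructor
      · rintro ⟨-, hk⟩
        exact (hk d rfl).symm
      · rintro rfl
        exact ⟨by have := d.isLt; omega, by rintro i rfl; rfl⟩
    rw [this, Finset.card_singleton]
  · rw [risingSequences_eq] at h2
    have hne : Dset π ≠ ∅ := fun h => h1 (eq_one_of_Dset_empty h)
    have hpos : 0 < (Dset π).card := Finset.card_pos.mpr (Finset.nonempty_of_ne_empty hne)
    have h2' : 1 < (Dset π).card := by omega
    obtain ⟨a, ha, b, hb, hab⟩ := Finset.one_lt_card.mp h2'
    rw [Finset.card_eq_zero, Finset.filter_eq_empty_iff]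
    intro k _
    intro hk
    have hka := hk a ha
    have hkb := hk b hb
    exact hab (Fin.ext (by omega))

lemma Qgsr_eq (π : Equiv.Perm (Fin n)) :
    Qgsr n π = ((Finset.univ.filter fun S : Finset (Fin n) => permOf S = π).card : ℝ) / 2 ^ n := by
  rw [card_fiber, count_k, Qgsr]
  split_ifs with h1 h2
  · push_cast; ring
  · push_cast; ring
  · simp

end Part7
section Part8
open GSRAux
variable {n : ℕ}

lemma sum_fiber (i j : Fin n) :
    (Finset.univ.filter fun S : Finset (Fin n) => permOf S j = i).card
      = ∑ π ∈ Finset.univ.filter (fun π : Equiv.Perm (Fin n) => π j = i),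
          (Finset.univ.filter fun S : Finset (Fin n) => permOf S = π).card := by
  rw [Finset.card_eq_sum_card_fiberwise
    (f := fun S : Finset (Fin n) => permOf S)
    (t := Finset.univ.filter (fun π : Equiv.Perm (Fin n) => π j = i))]
  · apply Finset.sum_congr rfl
    intro π hπ
    simp only [Finset.mem_filter, Finset.mem_univ, true_and] at hπ
    congr 1
    ext S
    simp only [Finset.mem_coe, Finset.mem_filter, Finset.mem_univ, true_and]
    constructor
    · rintro ⟨-, h⟩; exact h
    · rintro rfl; exact ⟨hπ, rfl⟩
  · intro S hS
    simp only [Finset.mem_coe, Finset.mem_filter, Finset.mem_univ, true_and] at hS ⊢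
    exact hS

lemma Pmat_eq_card (i j : Fin n) :
    Pmat n i j = ((Finset.univ.filter fun S : Finset (Fin n) => gfun S i = j).card : ℝ) / 2 ^ n := by
  have h1 : (Finset.univ.filter fun S : Finset (Fin n) => gfun S i = j)
      = (Finset.univ.filter fun S : Finset (Fin n) => permOf S j = i) := by
    apply Finset.filter_congr
    intro S _
    exact (permOf_apply_eq_iff S i j).symm
  rw [h1, sum_fiber i j, Pmat]
  push_cast
  rw [Finset.sum_div]
  exact Finset.sum_congr rfl fun π _ => Qgsr_eq π

lemma card_gfun_eq (i j : Fin n) :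
    (Finset.univ.filter fun S : Finset (Fin n) => gfun S i = j).card
      = (Finset.univ.filter fun S : Finset (Fin n) =>
            j ∈ S ∧ (S.filter (· < j)).card = (i : ℕ)).card
        + (Finset.univ.filter fun S : Finset (Fin n) =>
            j ∉ S ∧ (S.filter (fun t => j < t)).card + (j : ℕ) = (i : ℕ)).card := by
  have h1 : (Finset.univ.filter fun S : Finset (Fin n) => gfun S i = j)
      = (Finset.univ.filter fun S : Finset (Fin n) =>
            (j ∈ S ∧ (S.filter (· < j)).card = (i : ℕ)) ∨
            (j ∉ S ∧ (S.filter (fun t => j < t)).card + (j : ℕ) = (i : ℕ))) := by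
    apply Finset.filter_congr
    intro S _
    exact gfun_eq_iff S i j
  rw [h1, Finset.filter_or, Finset.card_union_of_disjoint]
  rw [Finset.disjoint_filter]
  rintro S - ⟨hj, -⟩ ⟨hj', -⟩
  exact hj' hj

end Part8
/-- The GSR transition probabilities (with 1-based labels `I = i+1`, `J = j+1`):
`P_{IJ} = C(J-1, J-I)/2^J` if `I < J`, `(2^{J-1}+2^{n-J})/2^n` if `I = J`, and
`C(n-J, I-J)/2^{n-J+1}` if `I > J`. -/
theorem gsr_transition_matrix (n : ℕ) (i j : Fin n) :
    ((i : ℕ) < (j : ℕ) →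
      Pmat n i j = (1 / 2 ^ ((j : ℕ) + 1)) * ((j : ℕ).choose ((j : ℕ) - (i : ℕ)) : ℝ)) ∧
    (i = j →
      Pmat n i j = ((2 : ℝ) ^ (j : ℕ) + 2 ^ (n - (j : ℕ) - 1)) / 2 ^ n) ∧
    ((j : ℕ) < (i : ℕ) →
      Pmat n i j = (1 / 2 ^ (n - (j : ℕ))) * (((n - (j : ℕ) - 1).choose ((i : ℕ) - (j : ℕ))) : ℝ)) := by
  have hjn : (j : ℕ) < n := j.isLt
  have hin : (i : ℕ) < n := i.isLt
  refine ⟨?_, ?_, ?_⟩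
  · intro hij
    rw [Pmat_eq_card, card_gfun_eq, card_set1 i j, card_set2_empty i j hij]
    rw [Nat.choose_symm (le_of_lt hij)]
    have h2n : (2 : ℝ) ^ n = 2 ^ ((j : ℕ) + 1) * 2 ^ (n - 1 - (j : ℕ)) := by
      rw [← pow_add]; congr 1; omega
    push_cast
    rw [h2n]
    have hne1 : ((2 : ℝ) ^ ((j : ℕ) + 1)) ≠ 0 := by positivity
    have hne2 : ((2 : ℝ) ^ (n - 1 - (j : ℕ))) ≠ 0 := by positivity
    field_simp
    ring
  · rintro rfl
    rw [Pmat_eq_card, card_gfun_eq, card_set1 i i, card_set2 i i (le_refl _)]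
    rw [Nat.choose_self, Nat.sub_self, Nat.choose_zero_right]
    have : n - (i : ℕ) - 1 = n - 1 - (i : ℕ) := by omega
    rw [this]
    push_cast
    ring
  · intro hij
    rw [Pmat_eq_card, card_gfun_eq, card_set1_empty i j hij, card_set2 i j (le_of_lt hij)]
    have h2n : (2 : ℝ) ^ n = 2 ^ ((j : ℕ)) * 2 ^ (n - (j : ℕ)) := by
      rw [← pow_add]; congr 1; omega
    have : n - (j : ℕ) - 1 = n - 1 - (j : ℕ) := by omega
    rw [this]
    push_cast
    rw [h2n]
    have hne1 : ((2 : ℝ) ^ ((j : ℕ))) ≠ 0 := by positivity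
    have hne2 : ((2 : ℝ) ^ (n - (j : ℕ))) ≠ 0 := by positivity
    field_simp
    ring
end

section
/- Define S(n) = Σ_{k=1}^n C(n,k)·f(k, n-k), where f satisfies f(a,b) = max{a,b}/(a+b) + (b/(a+b))f(a,b-1) + (a/(a+b))f(a-1,b) for a,b ≥ 1 and f(a,0) = f(0,a) = a. Then for n ≥ 2, S(n) = 2^{n-1} + C(n-1, ⌊(n-1)/2⌋) + n − 2 + 2·S(n-1). -/
/-- Optimal expected number of correct guesses when two piles of sizes `a` and `b`
are interleaved uniformly at random and guessed with complete feedback. -/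
noncomputable def optReward : ℕ → ℕ → ℝ
  | a, 0 => a
  | 0, b => b
  | (a + 1), (b + 1) =>
      max (((a : ℝ) + 1) / ((a : ℝ) + (b : ℝ) + 2)) (((b : ℝ) + 1) / ((a : ℝ) + (b : ℝ) + 2))
        + (((b : ℝ) + 1) / ((a : ℝ) + (b : ℝ) + 2)) * optReward (a + 1) b
        + (((a : ℝ) + 1) / ((a : ℝ) + (b : ℝ) + 2)) * optReward a (b + 1)
  termination_by a b => a + b

/-- `S(n) = Σ_{k=1}^n C(n,k)·f(k, n-k)`. -/
noncomputable def Ssum (n : ℕ) : ℝ :=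
  ∑ k ∈ Finset.Icc 1 n, (n.choose k : ℝ) * optReward k (n - k)

lemma optReward_zero_right (a : ℕ) : optReward a 0 = a := by simp [optReward]
lemma optReward_zero_left (b : ℕ) : optReward 0 b = b := by cases b <;> simp [optReward]

noncomputable def gR (a b : ℕ) : ℝ := (((a+b).choose a : ℕ) : ℝ) * optReward a b

lemma gR_zero_right (a : ℕ) : gR a 0 = a := by simp [gR, optReward_zero_right]
lemma gR_zero_left (b : ℕ) : gR 0 b = b := by simp [gR, optReward_zero_left]

lemma Ssum_eq (m : ℕ) : Ssum m = ∑ i ∈ Finset.range m, gR (i+1) (m-1-i) := by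
  unfold Ssum
  rw [← Finset.Ico_add_one_right_eq_Icc, Finset.sum_Ico_eq_sum_range]
  refine Finset.sum_congr rfl ?_
  intro i hi
  simp only [Finset.mem_range] at hi
  unfold gR
  rw [show 1+i = i+1 by omega, show m - (i+1) = m-1-i by omega,
      show (i+1)+(m-1-i) = m by omega]

lemma hSC_lemma (m : ℕ) (hm : 1 ≤ m) :
    ∑ i ∈ Finset.range m, gR i (m-i) = Ssum m := by
  obtain ⟨m', rfl⟩ : ∃ m', m = m' + 1 := ⟨m-1, by omega⟩
  have L : ∑ i ∈ Finset.range (m'+1), gR i (m'+1-i)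
      = (∑ i ∈ Finset.range m', gR (i+1) (m'-i)) + ((m':ℝ)+1) := by
    rw [Finset.sum_range_succ']
    have h2 : ∀ i ∈ Finset.range m', gR (i+1) (m'+1-(i+1)) = gR (i+1) (m'-i) :=
      fun i _ => by rw [show m'+1-(i+1) = m'-i by omega]
    rw [Finset.sum_congr rfl h2, Nat.sub_zero, gR_zero_left]
    push_cast
    ring
  have R : Ssum (m'+1) = (∑ i ∈ Finset.range m', gR (i+1) (m'-i)) + ((m':ℝ)+1) := by
    rw [Ssum_eq (m'+1)]
    have h1 : ∀ i ∈ Finset.range (m'+1), gR (i+1) (m'+1-1-i) = gR (i+1) (m'-i) :=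
      fun i _ => by rw [show m'+1-1-i = m'-i by omega]
    rw [Finset.sum_congr rfl h1, Finset.sum_range_succ, Nat.sub_self, gR_zero_right]
    push_cast
    ring
  rw [L, R]
-- ℕ binomial identities
lemma nat_id1 (a b : ℕ) :
    (a+b+2).choose (a+1) * (b+1) = (a+b+1).choose (a+1) * (a+b+2) := by
  have h2 : (a+b+1).choose (a+1) = (a+b+1).choose b := by
    have := Nat.choose_symm (n := a+b+1) (k := b) (by omega)
    have e : a+b+1-b = a+1 := by omega
    rw [e] at this; exact this
  have h3 : (a+b+2).choose (a+1) = (a+b+2).choose (b+1) := by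
    have := Nat.choose_symm (n := a+b+2) (k := b+1) (by omega)
    have e : a+b+2-(b+1) = a+1 := by omega
    rw [e] at this; exact this
  rw [h2, h3]
  have h1 := Nat.add_one_mul_choose_eq (a+b+1) b
  have e : a+b+1+1 = a+b+2 := by omega
  rw [e] at h1
  linarith
lemma nat_id2 (a b : ℕ) :
    (a+b+2).choose (a+1) * (a+1) = (a+b+1).choose a * (a+b+2) := by
  have h1 := Nat.add_one_mul_choose_eq (a+b+1) a
  have e : a+b+1+1 = a+b+2 := by omega
  rw [e] at h1
  linarith

lemma gR_rec (a b : ℕ) :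
    gR (a+1) (b+1) = (((a+b+2).choose (a+1) : ℕ) : ℝ) * ((max (a+1) (b+1) : ℕ) : ℝ) / ((a:ℝ)+b+2)
      + gR (a+1) b + gR a (b+1) := by
  have hs : ((a:ℝ) + b + 2) > 0 := by positivity
  have hopt : optReward (a+1) (b+1) =
      max (((a : ℝ) + 1) / ((a : ℝ) + (b : ℝ) + 2)) (((b : ℝ) + 1) / ((a : ℝ) + (b : ℝ) + 2))
        + (((b : ℝ) + 1) / ((a : ℝ) + (b : ℝ) + 2)) * optReward (a + 1) b
        + (((a : ℝ) + 1) / ((a : ℝ) + (b : ℝ) + 2)) * optReward a (b + 1) := by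
    rw [optReward]
  have hmax : max (((a : ℝ) + 1) / ((a : ℝ) + (b : ℝ) + 2)) (((b : ℝ) + 1) / ((a : ℝ) + (b : ℝ) + 2))
      = ((max (a+1) (b+1) : ℕ) : ℝ) / ((a:ℝ)+b+2) := by
    rw [max_div_div_right hs.le]
    push_cast [Nat.cast_max]
    ring_nf
  have e1 : a+1+(b+1) = a+b+2 := by omega
  have e2 : a+1+b = a+b+1 := by omega
  have e3 : a+(b+1) = a+b+1 := by omega
  have hC1 : (((a+b+2).choose (a+1) : ℕ) : ℝ) * (((b:ℝ)+1) / ((a:ℝ)+b+2))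
      = (((a+b+1).choose (a+1) : ℕ) : ℝ) := by
    have hnat := congrArg (Nat.cast : ℕ → ℝ) (nat_id1 a b)
    push_cast at hnat
    field_simp
    linarith
  have hC2 : (((a+b+2).choose (a+1) : ℕ) : ℝ) * (((a:ℝ)+1) / ((a:ℝ)+b+2))
      = (((a+b+1).choose a : ℕ) : ℝ) := by
    have hnat := congrArg (Nat.cast : ℕ → ℝ) (nat_id2 a b)
    push_cast at hnat
    field_simp
    linarith
  simp only [gR, e1, e2, e3, hopt, hmax]
  rw [mul_add, mul_add, ← mul_assoc, ← mul_assoc, hC1, hC2, mul_div_assoc]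

lemma gR_rec' (a b : ℕ) (ha : 1 ≤ a) (hb : 1 ≤ b) :
    gR a b = (((a+b).choose a : ℕ) : ℝ) * ((max a b : ℕ) : ℝ) / ((a+b : ℕ) : ℝ)
      + gR a (b-1) + gR (a-1) b := by
  obtain ⟨a', rfl⟩ : ∃ a', a = a' + 1 := ⟨a-1, by omega⟩
  obtain ⟨b', rfl⟩ : ∃ b', b = b' + 1 := ⟨b-1, by omega⟩
  have := gR_rec a' b'
  have e1 : a'+1+(b'+1) = a'+b'+2 := by omega
  simp only [e1, Nat.add_sub_cancel] at this ⊢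
  rw [this]
  push_cast
  ring_nf
lemma sum_k_choose (n : ℕ) (hn : 1 ≤ n) :
    ∑ k ∈ Finset.range (n+1), (n.choose k : ℝ) * k = n * 2^(n-1) := by
  have hterm : ∀ k : ℕ, (n.choose (k+1) : ℝ) * ((k:ℝ)+1) = (n:ℝ) * (((n-1).choose k : ℕ) : ℝ) := by
    intro k
    have h := Nat.add_one_mul_choose_eq (n-1) k
    rw [show n-1+1 = n by omega] at h
    have := congrArg (Nat.cast : ℕ → ℝ) h
    push_cast at this
    linarith
  rw [Finset.sum_range_succ']
  push_cast
  rw [Finset.sum_congr rfl (fun k _ => hterm k), ← Finset.mul_sum]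
  have hsum : ∑ k ∈ Finset.range n, (((n-1).choose k : ℕ):ℝ) = 2^(n-1) := by
    have := congrArg (Nat.cast : ℕ → ℝ) (Nat.sum_range_choose (n-1))
    push_cast at this
    rw [show (n-1)+1 = n by omega] at this
    exact this
  rw [hsum]
  ring

lemma sum_maxdiff (n : ℕ) (hn : 1 ≤ n) :
    ∑ k ∈ Finset.range (n+1), (n.choose k : ℝ) * ((n - k - k : ℕ) : ℝ)
      = n * (((n-1).choose ((n-1)/2) : ℕ) : ℝ) := by
  set h := (n-1)/2 with hh
  have hsub : Finset.range (h+1) ⊆ Finset.range (n+1) := by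
    apply Finset.range_subset_range.2; omega
  rw [← Finset.sum_subset hsub (by
    intro k hk hk'
    simp only [Finset.mem_range] at hk hk'
    have : n - k - k = 0 := by omega
    rw [this]
    simp)]
  rw [Finset.sum_range_succ']
  have hterm : ∀ i ∈ Finset.range h,
      (n.choose (i+1) : ℝ) * ((n - (i+1) - (i+1) : ℕ) : ℝ)
        = (n:ℝ) * (((n-1).choose (i+1) : ℕ):ℝ) - (n:ℝ) * (((n-1).choose i : ℕ):ℝ) := by
    intro i hi
    simp only [Finset.mem_range] at hi
    have h2k : 2*(i+1) ≤ n - 1 := by omega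
    -- fact2 : n.choose (i+1) * (i+1) = n * (n-1).choose i
    have f2 := Nat.add_one_mul_choose_eq (n-1) i
    rw [show n-1+1 = n by omega] at f2
    -- fact1 : n.choose (i+1) * (n - (i+1)) = n * (n-1).choose (i+1)
    have f1a := Nat.choose_succ_right_eq n (i+1)
    have f1b := Nat.add_one_mul_choose_eq (n-1) (i+1)
    rw [show n-1+1 = n by omega] at f1b
    -- f1b : n * (n-1).choose (i+1) = n.choose (i+1+1) * (i+1+1)
    -- f1a : n.choose (i+1+1) * (i+1+1) = n.choose (i+1) * (n - (i+1))
    have f1 : n.choose (i+1) * (n - (i+1)) = n * (n-1).choose (i+1) := by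
      rw [f1b, f1a]
    have c1 := congrArg (Nat.cast : ℕ → ℝ) f1
    have c2 := congrArg (Nat.cast : ℕ → ℝ) f2
    push_cast [Nat.cast_sub (show i+1 ≤ n by omega)] at c1 c2
    have ecast : ((n - (i+1) - (i+1) : ℕ) : ℝ) = (n:ℝ) - (i+1) - (i+1) := by
      have e1 : ((n - (i+1) - (i+1) : ℕ)) = n - (2*(i+1)) := by omega
      rw [e1, Nat.cast_sub (by omega)]
      push_cast; ring
    rw [ecast]
    nlinarith [c1, c2]
  rw [Finset.sum_congr rfl hterm, Finset.sum_range_sub (fun i => (n:ℝ) * (((n-1).choose i : ℕ):ℝ))]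
  simp [Nat.choose_zero_right]

lemma keyMax (n : ℕ) (hn : 1 ≤ n) :
    ∑ k ∈ Finset.range (n+1), (n.choose k : ℝ) * ((max k (n-k) : ℕ) : ℝ)
      = n * 2^(n-1) + n * (((n-1).choose ((n-1)/2) : ℕ) : ℝ) := by
  have hterm : ∀ k ∈ Finset.range (n+1),
      (n.choose k : ℝ) * ((max k (n-k) : ℕ) : ℝ)
        = (n.choose k : ℝ) * k + (n.choose k : ℝ) * ((n - k - k : ℕ) : ℝ) := by
    intro k hk
    have e : (max k (n-k)) = k + (n - k - k) := by omega
    rw [e]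
    push_cast
    ring
  rw [Finset.sum_congr rfl hterm, Finset.sum_add_distrib, sum_k_choose n hn, sum_maxdiff n hn]

/-- For `n ≥ 2`, `S(n) = 2^{n-1} + C(n-1, ⌊(n-1)/2⌋) + n − 2 + 2·S(n-1)`. -/
theorem Ssum_recursion (n : ℕ) (hn : 2 ≤ n) :
    Ssum n = 2 ^ (n - 1) + ((n - 1).choose ((n - 1) / 2) : ℝ) + (n : ℝ) - 2
        + 2 * Ssum (n - 1) := by
  obtain ⟨m, rfl⟩ : ∃ m, n = m + 1 := ⟨n-1, by omega⟩
  have hm : 1 ≤ m := by omega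
  simp only [Nat.add_sub_cancel]
  have hS1 : Ssum (m+1) = (∑ i ∈ Finset.range m, gR (i+1) (m-i)) + gR (m+1) 0 := by
    rw [Ssum_eq (m+1), Finset.sum_range_succ]
    have h2 : ∀ i ∈ Finset.range m, gR (i+1) (m+1-1-i) = gR (i+1) (m-i) :=
      fun i _ => by rw [show m+1-1-i = m-i by omega]
    rw [Finset.sum_congr rfl h2, show m+1-1-m = 0 by omega]
  have hexp : ∀ i ∈ Finset.range m, gR (i+1) (m-i)
      = ((m+1).choose (i+1) : ℝ) * ((max (i+1) (m-i) : ℕ) : ℝ) / ((m:ℝ)+1)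
        + gR (i+1) (m-1-i) + gR i (m-i) := by
    intro i hi
    simp only [Finset.mem_range] at hi
    have h := gR_rec' (i+1) (m-i) (by omega) (by omega)
    rw [show (i+1)+(m-i) = m+1 by omega, show m-i-1 = m-1-i by omega,
        show i+1-1 = i by omega] at h
    rw [h]
    push_cast
    ring
  rw [hS1, Finset.sum_congr rfl hexp, Finset.sum_add_distrib, Finset.sum_add_distrib]
  have hSB : ∑ i ∈ Finset.range m, gR (i+1) (m-1-i) = Ssum m := (Ssum_eq m).symm
  have hSC := hSC_lemma m hm
  have hSA : ∑ i ∈ Finset.range m,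
      ((m+1).choose (i+1) : ℝ) * ((max (i+1) (m-i) : ℕ) : ℝ) / ((m:ℝ)+1)
      = 2^m + ((m.choose (m/2) : ℕ) : ℝ) - 2 := by
    have hk := keyMax (m+1) (by omega)
    simp only [Nat.add_sub_cancel] at hk
    rw [Finset.sum_range_succ', Finset.sum_range_succ] at hk
    have h2 : ∀ i ∈ Finset.range m,
        ((m+1).choose (i+1) : ℝ) * ((max (i+1) (m+1-(i+1)) : ℕ) : ℝ)
          = ((m+1).choose (i+1) : ℝ) * ((max (i+1) (m-i) : ℕ) : ℝ) :=
      fun i _ => by rw [show m+1-(i+1) = m-i by omega]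
    rw [Finset.sum_congr rfl h2] at hk
    have e1 : max (m+1) (m+1-(m+1)) = m+1 := by omega
    have e2 : max 0 (m+1-0) = m+1 := by omega
    rw [e1, e2, Nat.choose_self, Nat.choose_zero_right] at hk
    rw [← Finset.sum_div, div_eq_iff (show ((m:ℝ)+1) ≠ 0 by positivity)]
    push_cast at hk ⊢
    linear_combination hk
  rw [hSA, hSB, hSC, gR_zero_right]
  push_cast
  ring
end

section
/- Define F(n) = S(n)/2^{n+1}, where S satisfies S(1) = s₁ (a fixed real) and S(n) = 2^{n-1} + C(n-1, ⌊(n-1)/2⌋) + n − 2 + 2S(n-1) for n ≥ 2. Then F(n) = n/4 + √(n/(2π)) + O(1); i.e., there exists a constant C with |F(n) − n/4 − √(n/(2π))| ≤ C for all n ≥ 1. -/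
/-!
Dividing the recursion by `2^(n+1)` gives `F(n+1) - F(n) = 1/4 + a_n/4 + (n-1)/2^(n+2)` with
`a_i = C(i, ⌊i/2⌋)/2^i`, which telescopes to
`F(n) = (S(1) - 1)/4 + n/4 + (a_0 + ⋯ + a_{n-1})/4 - n/2^(n+1)`.
Since `a_{2k-1} = a_{2k} = b_k := C(2k, k)/4^k`, the partial sums up to odd indices are
`2(2k+1)b_k - 1`, and Wallis' product, which equals `1/((2k+1) b_k^2)` and lies in
`[(2k+1)/(2k+2) · π/2, π/2]`, traps `(2k+1) b_k / 2` between `√((2k+1)/(2π))` and `√((2k+2)/(2π))`.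
-/

open Real

open Finset Wallis

noncomputable def centralBinomRatio (n : ℕ) : ℝ := (n.centralBinom : ℝ) / 4 ^ n

noncomputable def midBinomRatio (i : ℕ) : ℝ := (i.choose (i / 2) : ℝ) / 2 ^ i

lemma centralBinomRatio_succ (n : ℕ) :
    centralBinomRatio (n + 1) = centralBinomRatio n * ((2 * n + 1) / (2 * n + 2)) := by
  have h : ((n : ℝ) + 1) * ((n + 1).centralBinom : ℝ) = 2 * (2 * n + 1) * n.centralBinom := by
    exact_mod_cast Nat.succ_mul_centralBinom_succ n
  rw [centralBinomRatio, centralBinomRatio, pow_succ]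
  field_simp
  linear_combination 2 * h

lemma odd_mul_centralBinomRatio_sq_mul_W (n : ℕ) :
    (2 * n + 1) * centralBinomRatio n ^ 2 * W n = 1 := by
  induction n with
  | zero => simp [W, centralBinomRatio]
  | succ n ih =>
    rw [W_succ, centralBinomRatio_succ]
    push_cast
    field_simp
    linear_combination (2 * (n : ℝ) + 3) * ih

lemma sq_odd_mul_centralBinomRatio_div_two (n : ℕ) :
    ((2 * n + 1) * centralBinomRatio n / 2) ^ 2 = (2 * n + 1) / (4 * W n) := by
  have hW := (W_pos n).ne'
  rw [eq_div_iff (by positivity)]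
  linear_combination (2 * (n : ℝ) + 1) * odd_mul_centralBinomRatio_sq_mul_W n

lemma sqrt_le_odd_mul_centralBinomRatio_div_two (n : ℕ) :
    √((2 * n + 1) / (2 * π)) ≤ (2 * n + 1) * centralBinomRatio n / 2 := by
  rw [sqrt_le_left (by unfold centralBinomRatio; positivity),
    sq_odd_mul_centralBinomRatio_div_two, div_le_div_iff₀ (by positivity) (by have := W_pos n; positivity)]
  nlinarith [W_le n]

lemma odd_mul_centralBinomRatio_div_two_le_sqrt (n : ℕ) :
    (2 * n + 1) * centralBinomRatio n / 2 ≤ √((2 * n + 2) / (2 * π)) := by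
  rw [le_sqrt (by unfold centralBinomRatio; positivity) (by positivity),
    sq_odd_mul_centralBinomRatio_div_two, div_le_div_iff₀ (by have := W_pos n; positivity)
    (by positivity)]
  have := le_W n
  rw [div_mul_eq_mul_div, div_le_iff₀ (by positivity)] at this
  linarith

lemma sqrt_le_sqrt_add_one {x y : ℝ} (hx : 0 ≤ x) (hy : y ≤ x + 1) : √y ≤ √x + 1 := by
  rw [sqrt_le_left (by positivity)]
  nlinarith [sq_sqrt hx, sqrt_nonneg x]

lemma midBinomRatio_nonneg (i : ℕ) : 0 ≤ midBinomRatio i := by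
  unfold midBinomRatio; positivity

lemma midBinomRatio_le_one (i : ℕ) : midBinomRatio i ≤ 1 := by
  rw [midBinomRatio, div_le_one (by positivity)]
  exact_mod_cast Nat.choose_le_two_pow i (i / 2)

lemma midBinomRatio_two_mul (n : ℕ) : midBinomRatio (2 * n) = centralBinomRatio n := by
  rw [midBinomRatio, centralBinomRatio, Nat.centralBinom, Nat.mul_div_cancel_left n two_pos,
    pow_mul]
  norm_num

lemma midBinomRatio_two_mul_add_one (n : ℕ) :
    midBinomRatio (2 * n + 1) = centralBinomRatio (n + 1) := by
  have hchoose : (n + 1).centralBinom = 2 * (2 * n + 1).choose n := by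
    rw [Nat.centralBinom, show 2 * (n + 1) = 2 * n + 1 + 1 by ring, Nat.choose_succ_succ,
      Nat.choose_symm_half]
    ring
  rw [midBinomRatio, centralBinomRatio, hchoose, show (2 * n + 1) / 2 = n by omega]
  push_cast
  rw [pow_succ, pow_mul]
  ring

lemma sum_range_two_mul_add_one_midBinomRatio (n : ℕ) :
    ∑ i ∈ range (2 * n + 1), midBinomRatio i = 2 * (2 * n + 1) * centralBinomRatio n - 1 := by
  induction n with
  | zero => norm_num [midBinomRatio, centralBinomRatio]
  | succ n ih =>
    rw [show 2 * (n + 1) + 1 = 2 * n + 1 + 1 + 1 by ring, sum_range_succ, sum_range_succ, ih,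
      midBinomRatio_two_mul_add_one, show 2 * n + 1 + 1 = 2 * (n + 1) by ring,
      midBinomRatio_two_mul, centralBinomRatio_succ]
    push_cast
    field_simp
    ring

lemma abs_sum_range_midBinomRatio_div_four_sub_sqrt_le (m : ℕ) (hm : 1 ≤ m) :
    |(∑ i ∈ range m, midBinomRatio i) / 4 - √(m / (2 * π))| ≤ 5 / 4 := by
  obtain ⟨n, hmn⟩ : ∃ n, m = 2 * n + 1 ∨ m = 2 * n + 2 := ⟨(m - 1) / 2, by omega⟩
  have hm_lo : (2 * n + 1 : ℝ) ≤ m := by rcases hmn with rfl | rfl <;> push_cast <;> linarith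
  have hm_hi : (m : ℝ) ≤ 2 * n + 2 := by rcases hmn with rfl | rfl <;> push_cast <;> linarith
  have hsum : (∑ i ∈ range (2 * n + 1), midBinomRatio i) ≤ ∑ i ∈ range m, midBinomRatio i ∧
      ∑ i ∈ range m, midBinomRatio i ≤ (∑ i ∈ range (2 * n + 1), midBinomRatio i) + 1 := by
    rcases hmn with rfl | rfl
    · simp
    · rw [sum_range_succ _ (2 * n + 1)]
      exact ⟨by linarith [midBinomRatio_nonneg (2 * n + 1)],
        by linarith [midBinomRatio_le_one (2 * n + 1)]⟩
  have hgap : √((2 * n + 2) / (2 * π)) ≤ √((2 * n + 1) / (2 * π)) + 1 := by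
    refine sqrt_le_sqrt_add_one (by positivity) ?_
    rw [div_add_one (by positivity), div_le_div_iff_of_pos_right (by positivity)]
    linarith [pi_gt_three]
  have hsqrt_lo : √((2 * n + 1) / (2 * π)) ≤ √(m / (2 * π)) := by gcongr
  have hsqrt_hi : √(m / (2 * π)) ≤ √((2 * n + 2) / (2 * π)) := by gcongr
  rw [sum_range_two_mul_add_one_midBinomRatio] at hsum
  have hv_lo := sqrt_le_odd_mul_centralBinomRatio_div_two n
  have hv_hi := odd_mul_centralBinomRatio_div_two_le_sqrt n
  rw [abs_le]
  constructor <;> linarith [hsum.1, hsum.2]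

lemma div_two_pow_eq_of_rec (S : ℕ → ℝ)
    (hS : ∀ n, 1 ≤ n → S (n + 1) = 2 ^ n + (n.choose (n / 2) : ℝ) + (n + 1 : ℕ) - 2 + 2 * S n)
    (n : ℕ) (hn : 1 ≤ n) :
    S n / 2 ^ (n + 1) =
      (S 1 - 1) / 4 + n / 4 + (∑ i ∈ range n, midBinomRatio i) / 4 - n / 2 ^ (n + 1) := by
  induction n, hn using Nat.le_induction with
  | base => norm_num [midBinomRatio]; ring
  | succ n hn ih =>
    rw [div_eq_iff (by positivity)] at ih
    rw [hS n hn, ih, sum_range_succ, midBinomRatio]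
    push_cast
    field_simp
    ring

/-- If `S : ℕ → ℝ` satisfies `S(n) = 2^{n-1} + C(n-1, ⌊(n-1)/2⌋) + n − 2 + 2S(n-1)`
for all `n ≥ 2` (with `S(1)` arbitrary), then `F(n) = S(n)/2^{n+1}` satisfies
`F(n) = n/4 + √(n/(2π)) + O(1)`. -/
theorem F_asymptotic (S : ℕ → ℝ)
    (hS : ∀ n : ℕ, 2 ≤ n →
      S n = 2 ^ (n - 1) + ((n - 1).choose ((n - 1) / 2) : ℝ) + (n : ℝ) - 2
        + 2 * S (n - 1)) :
    ∃ C : ℝ, ∀ n : ℕ, 1 ≤ n →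
      |S n / 2 ^ (n + 1) - (n : ℝ) / 4 - Real.sqrt ((n : ℝ) / (2 * π))| ≤ C := by
  have hS' : ∀ n, 1 ≤ n →
      S (n + 1) = 2 ^ n + (n.choose (n / 2) : ℝ) + (n + 1 : ℕ) - 2 + 2 * S n := fun n hn => by
    simpa using hS (n + 1) (by omega)
  refine ⟨|(S 1 - 1) / 4| + 5 / 4 + 1 / 2, fun n hn => ?_⟩
  have hsum := abs_sum_range_midBinomRatio_div_four_sub_sqrt_le n hn
  have htail : (n : ℝ) / 2 ^ (n + 1) ≤ 1 / 2 := by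
    rw [pow_succ, div_le_div_iff₀ (by positivity) (by norm_num)]
    have : (n : ℝ) < 2 ^ n := by exact_mod_cast n.lt_two_pow_self
    linarith
  have htail_nonneg : (0 : ℝ) ≤ n / 2 ^ (n + 1) := by positivity
  rw [div_two_pow_eq_of_rec S hS' n hn, abs_le]
  constructor <;>
    linarith [abs_le.mp hsum, neg_abs_le ((S 1 - 1) / 4), le_abs_self ((S 1 - 1) / 4)]
end
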